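/- arXiv:1002.2666 — 2 statements merged into one kernel-verified Lean document; each statement's English description precedes it below -/
import Mathlib

section
/- The function φ_4(x) = x^{-k}·e^x·L_m^{-k}(-x) satisfies x·φ_4'' + (k+1-x)·φ_4' = (m+1)·φ_4 for x > 0, every nonnegative integer m, and real k. -/
/-!
Write `φ(x) = x ^ (-k) e^x w(x)` with `w(x) = L_m^{-k}(-x)`. Conjugating by the weight
`x ^ (-k) e^x` turns the Laguerre operator into `x w'' + (1 - k + x) w' + w`, and the Laguerre
equation `s u'' + (1 - k - s) u' + m u = 0` for `u = L_m^{-k}`, read at `s = -x`, says that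
`x w'' + (1 - k + x) w' = m w`. The Laguerre equation itself is the coefficient recursion
`(i + 1)(α + i + 1) c_{i+1} = (i - n) c_i` of `L_n^α`.
-/

/-- Associated Laguerre polynomial `L_n^k(x) = ∑_{i=0}^n (-1)^i C(n+k, n-i) x^i / i!`. -/
noncomputable def lag (n : ℕ) (k : ℝ) (x : ℝ) : ℝ :=
  ∑ i ∈ Finset.range (n + 1),
    (-1 : ℝ) ^ i * (∏ j ∈ Finset.range (n - i), (k + (i : ℝ) + 1 + (j : ℝ))) /
      (Nat.factorial (n - i) : ℝ) * x ^ i / (Nat.factorial i : ℝ)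

open Polynomial Finset Real Filter Topology

-- Zero beyond the degree, so that `lagCoeff_succ` also holds at `i = n`.
noncomputable def lagCoeff (n : ℕ) (α : ℝ) (i : ℕ) : ℝ :=
  if i ≤ n then
    (-1 : ℝ) ^ i * (∏ j ∈ range (n - i), (α + (i : ℝ) + 1 + (j : ℝ))) /
      (Nat.factorial (n - i) : ℝ) / (Nat.factorial i : ℝ)
  else 0

noncomputable def lagPoly (n : ℕ) (α : ℝ) : ℝ[X] :=
  ∑ i ∈ range (n + 1), C (lagCoeff n α i) * X ^ i

lemma lag_eq_eval_lagPoly (n : ℕ) (α x : ℝ) : lag n α x = (lagPoly n α).eval x := by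
  simp only [lag, lagPoly, lagCoeff, eval_finsetSum, eval_mul, eval_C, eval_pow, eval_X]
  refine sum_congr rfl fun i hi => ?_
  rw [if_pos (Nat.lt_succ_iff.mp (mem_range.mp hi))]
  ring

lemma coeff_lagPoly (n : ℕ) (α : ℝ) (i : ℕ) : (lagPoly n α).coeff i = lagCoeff n α i := by
  simp only [lagPoly, finsetSum_coeff, coeff_C_mul_X_pow]
  rw [sum_ite_eq]
  exact ite_eq_left_iff.mpr fun h => (if_neg (by simpa [Nat.lt_succ_iff] using h)).symm

lemma lagCoeff_succ (n : ℕ) (α : ℝ) (i : ℕ) :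
    ((i : ℝ) + 1) * (α + i + 1) * lagCoeff n α (i + 1) = ((i : ℝ) - n) * lagCoeff n α i := by
  unfold lagCoeff
  rcases lt_trichotomy i n with h | rfl | h
  · rw [if_pos (by omega : i + 1 ≤ n), if_pos h.le]
    obtain ⟨d, rfl⟩ : ∃ d, n = i + 1 + d := ⟨n - (i + 1), by omega⟩
    rw [show i + 1 + d - i = d + 1 by omega, show i + 1 + d - (i + 1) = d by omega,
      prod_range_succ', Nat.factorial_succ d, Nat.factorial_succ i]
    have hshift : ∀ j ∈ range d, α + i + 1 + ((j + 1 : ℕ) : ℝ) = α + ((i + 1 : ℕ) : ℝ) + 1 + j :=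
      fun j _ => by push_cast; ring
    rw [prod_congr rfl hshift]
    push_cast
    field_simp
    ring
  · simp
  · rw [if_neg (by omega), if_neg (by omega)]
    simp

lemma lagPoly_ode (n : ℕ) (α : ℝ) :
    X * derivative (derivative (lagPoly n α)) + (C (α + 1) - X) * derivative (lagPoly n α)
      + C (n : ℝ) * lagPoly n α = 0 := by
  ext (_ | i)
  · simp only [coeff_add, coeff_zero, sub_mul, coeff_sub, mul_coeff_zero, coeff_X_zero,
      zero_mul, coeff_derivative, coeff_lagPoly, coeff_C_zero]
    have hrec := lagCoeff_succ n α 0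
    push_cast at hrec ⊢
    linear_combination hrec
  · simp only [coeff_add, coeff_zero, sub_mul, coeff_sub, coeff_X_mul, coeff_C_mul,
      coeff_derivative, coeff_lagPoly]
    have hrec := lagCoeff_succ n α (i + 1)
    push_cast at hrec ⊢
    linear_combination hrec

lemma eval_lagPoly_ode (n : ℕ) (α s : ℝ) :
    s * (derivative (derivative (lagPoly n α))).eval s
      + (α + 1 - s) * (derivative (lagPoly n α)).eval s + n * (lagPoly n α).eval s = 0 := by
  simpa using congrArg (eval s) (lagPoly_ode n α)

lemma hasDerivAt_rpow_neg_mul_exp (k : ℝ) {t : ℝ} (ht : t ≠ 0) :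
    HasDerivAt (fun s => s ^ (-k) * exp s) (t ^ (-k) * exp t * (1 - k / t)) t := by
  refine ((hasDerivAt_rpow_const (Or.inl ht)).mul (hasDerivAt_exp t)).congr_deriv ?_
  rw [rpow_sub_one ht]
  field_simp
  ring

noncomputable def laguerreOp (k : ℝ) (f : ℝ → ℝ) (x : ℝ) : ℝ :=
  x * deriv (deriv f) x + (k + 1 - x) * deriv f x

theorem laguerreOp_rpow_neg_mul_exp_mul (k : ℝ) {w w' : ℝ → ℝ} {w'' x : ℝ} (hx : x ≠ 0)
    (hw : ∀ᶠ t in 𝓝 x, HasDerivAt w (w' t) t) (hw' : HasDerivAt w' w'' x) :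
    laguerreOp k (fun t => t ^ (-k) * exp t * w t) x
      = x ^ (-k) * exp x * (x * w'' + (1 - k + x) * w' x + w x) := by
  set G : ℝ → ℝ := fun t => t ^ (-k) * exp t * (w' t + (1 - k * t⁻¹) * w t)
  have hderiv : ∀ t ≠ 0, HasDerivAt w (w' t) t →
      HasDerivAt (fun t => t ^ (-k) * exp t * w t) (G t) t := fun t ht hwt => by
    refine ((hasDerivAt_rpow_neg_mul_exp k ht).mul hwt).congr_deriv ?_
    simp only [G]
    ring
  have hderiv_eq : deriv (fun t => t ^ (-k) * exp t * w t) =ᶠ[𝓝 x] G := by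
    filter_upwards [hw, eventually_ne_nhds hx] with t hwt ht using (hderiv t ht hwt).deriv
  have hG : HasDerivAt G _ x := (hasDerivAt_rpow_neg_mul_exp k hx).mul
    (hw'.add ((((hasDerivAt_inv hx).const_mul k).const_sub 1).mul hw.self_of_nhds))
  rw [laguerreOp, hderiv_eq.deriv_eq, hG.deriv, (hderiv x hx hw.self_of_nhds).deriv]
  simp only [G]
  field_simp
  ring

lemma hasDerivAt_eval_neg (p : ℝ[X]) (t : ℝ) :
    HasDerivAt (fun s => p.eval (-s)) (-(derivative p).eval (-t)) t := by
  simpa [Function.comp_def] using (p.hasDerivAt (-t)).comp t (hasDerivAt_neg t)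

/--  is a formal eigenfunction of the Laguerre
operator with eigenvalue , for . -/
theorem laguerre_formal_eigenfunction_phi4 (m : ℕ) (k x : ℝ) (hx : 0 < x) :
    x * deriv (deriv (fun t => Real.rpow t (-k) * Real.exp t * lag m (-k) (-t))) x +
      (k + 1 - x) * deriv (fun t => Real.rpow t (-k) * Real.exp t * lag m (-k) (-t)) x
      = ((m : ℝ) + 1) * (Real.rpow x (-k) * Real.exp x * lag m (-k) (-x)) := by
  set p := lagPoly m (-k)
  have hφ : (fun t => Real.rpow t (-k) * Real.exp t * lag m (-k) (-t))
      = fun t => t ^ (-k) * exp t * p.eval (-t) := by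
    funext t
    rw [lag_eq_eval_lagPoly]
    rfl
  have hw' : HasDerivAt (fun s => -(derivative p).eval (-s))
      ((derivative (derivative p)).eval (-x)) x :=
    (hasDerivAt_eval_neg (derivative p) x).neg.congr_deriv (neg_neg _)
  change laguerreOp k _ x = _
  rw [hφ, laguerreOp_rpow_neg_mul_exp_mul k hx.ne' (.of_forall (hasDerivAt_eval_neg p)) hw',
    lag_eq_eval_lagPoly]
  linear_combination (-(x ^ (-k) * exp x)) * eval_lagPoly_ode m (-k) (-x)
end

section
/- The type I exceptional X_m Laguerre polynomial L^I_{k,n,m} := ξ_{k,m}·L_{n-m}^{k-1} + ξ_{k-1,m}·L_{n-m-1}^{k} (for n ≥ m) has degree exactly n, provided k > 0. -/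
/-! The leading coefficient of `L_j^k` is `(-1)^j / j!` for every `k`, so the first summand has
degree `m + (n - m) = n`, while the second has degree at most `m + (n - m - 1) < n`, or vanishes
when `m = n`. -/

/-- Associated Laguerre polynomial as a polynomial over ℝ. -/
noncomputable def lagP (n : ℕ) (k : ℝ) : Polynomial ℝ :=
  ∑ i ∈ Finset.range (n + 1),
    Polynomial.C ((-1 : ℝ) ^ i * (∏ j ∈ Finset.range (n - i), (k + (i : ℝ) + 1 + (j : ℝ))) /
      (Nat.factorial (n - i) : ℝ) / (Nat.factorial i : ℝ)) * Polynomial.X ^ i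

/-- Laguerre polynomial with integer index, zero for negative index. -/
noncomputable def lagPZ (j : ℤ) (k : ℝ) : Polynomial ℝ :=
  if 0 ≤ j then lagP j.toNat k else 0

/-- xi_{k,m} = L_m^k(-X) as a polynomial. -/
noncomputable def xiP (k : ℝ) (m : ℕ) : Polynomial ℝ := (lagP m k).comp (-Polynomial.X)

open Polynomial

lemma lagP_degree_le (n : ℕ) (k : ℝ) : (lagP n k).degree ≤ n :=
  (degree_sum_le _ _).trans <| Finset.sup_le fun i hi =>
    (degree_C_mul_X_pow_le i _).trans (by exact_mod_cast Finset.mem_range_succ_iff.mp hi)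

lemma lagP_coeff_self (n : ℕ) (k : ℝ) : (lagP n k).coeff n = (-1) ^ n / n.factorial := by
  rw [lagP, finsetSum_coeff, Finset.sum_eq_single_of_mem n (Finset.self_mem_range_succ n)]
  · simp
  · intro i _ hin
    simp [coeff_X_pow, hin.symm]

lemma lagP_degree (n : ℕ) (k : ℝ) : (lagP n k).degree = n :=
  degree_eq_of_le_of_coeff_ne_zero (lagP_degree_le n k) (by rw [lagP_coeff_self]; positivity)

lemma xiP_degree (k : ℝ) (m : ℕ) : (xiP k m).degree = m := by
  rw [xiP, degree_comp_neg_X, lagP_degree]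

lemma lagPZ_natCast (j : ℕ) (k : ℝ) : lagPZ j k = lagP j k := by
  simp [lagPZ]

lemma lagPZ_of_neg {j : ℤ} (hj : j < 0) (k : ℝ) : lagPZ j k = 0 :=
  if_neg (not_le.mpr hj)

lemma lagPZ_degree_lt {j : ℤ} {d : ℕ} (hjd : j < d) (k : ℝ) : (lagPZ j k).degree < d := by
  rcases lt_or_ge j 0 with hj | hj
  · rw [lagPZ_of_neg hj, degree_zero]
    exact WithBot.bot_lt_coe d
  · lift j to ℕ using hj
    rw [lagPZ_natCast, lagP_degree]
    exact_mod_cast hjd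

theorem XLaguerreI_degree_general (k : ℝ) (m n : ℕ) (hnm : m ≤ n) :
    (xiP k m * lagP (n - m) (k - 1) +
      xiP (k - 1) m * lagPZ ((n : ℤ) - (m : ℤ) - 1) k).degree = (n : ℕ) := by
  have hlead : (xiP k m * lagP (n - m) (k - 1)).degree = n := by
    rw [degree_mul, xiP_degree, lagP_degree, ← Nat.cast_add, Nat.add_sub_cancel' hnm]
  have hlower : (xiP (k - 1) m * lagPZ ((n : ℤ) - (m : ℤ) - 1) k).degree < n := by
    have hZ := lagPZ_degree_lt (j := (n : ℤ) - m - 1) (d := n - m) (by omega) k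
    calc _ = (m : WithBot ℕ) + (lagPZ ((n : ℤ) - m - 1) k).degree := by
          rw [degree_mul, xiP_degree]
      _ < m + (n - m : ℕ) := WithBot.add_lt_add_left WithBot.coe_ne_bot hZ
      _ = n := by rw [← Nat.cast_add, Nat.add_sub_cancel' hnm]
  rw [degree_add_eq_left_of_degree_lt (hlead ▸ hlower), hlead]

/-- The type I exceptional X_m Laguerre polynomial
xi_{k,m} L_{n-m}^{k-1} + xi_{k-1,m} L_{n-m-1}^k has degree exactly n when k > 0. -/
theorem XLaguerreI_degree (k : ℝ) (hk : 0 < k) (m n : ℕ) (hnm : m ≤ n) :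
    (xiP k m * lagP (n - m) (k - 1) +
      xiP (k - 1) m * lagPZ ((n : ℤ) - (m : ℤ) - 1) k).degree = (n : ℕ) :=
  XLaguerreI_degree_general k m n hnm
end
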